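/- arXiv:2202.06808 — 3 statements merged into one kernel-verified Lean document; each statement's English description precedes it below -/
import Mathlib

section
/- Let A be a commutative ring and J an ideal with A/J ≅ k' a field. If A ≅ k'[t]/(t^n) is a truncated polynomial ring over a field k' that is algebraic over ℚ, then the module of relative Kähler differentials Ω¹_{A/ℤ} relative to k' (i.e., the kernel of Ω¹_{A/ℤ} → Ω¹_{k'/ℤ}) modulo d(J) is zero; more concretely, Ω¹_{(A,J)}/d(J) = 0 where J = (t) and Ω¹_{(A,J)} = ker(Ω¹_{A/ℤ} → Ω¹_{k'/ℤ}). -/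
/-!
Since `k'` is separable algebraic over `ℚ` and `ℚ` is a localization of `ℤ`, `Ω[k'⁄ℤ] = 0`; so the
kernel in question is all of `Ω[A⁄ℤ]`, and `d` kills every constant of `A`. Hence
`d(c tᵐ) = m c tᵐ⁻¹ dt`, so `Ω[A⁄ℤ] = A • dt`, and conversely `c tᵐ dt = d(c tᵐ⁺¹ / (m + 1))`
with `c tᵐ⁺¹ / (m + 1) ∈ J`.
-/

open Polynomial

theorem KaehlerDifferential.D_ringHom_apply_eq_zero {K A : Type*} [CommRing K] [CommRing A]
    [Subsingleton Ω[K⁄ℤ]] (σ : K →+* A) (c : K) : D ℤ A (σ c) = 0 := by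
  let := σ.toAlgebra
  rw [← RingHom.algebraMap_toAlgebra σ, ← map_D ℤ ℤ K A, Subsingleton.elim (D ℤ K c) 0, map_zero]

instance Algebra.FormallyUnramified.int_of_isAlgebraic_rat (K : Type*) [Field K] [Algebra ℚ K]
    [Algebra.IsAlgebraic ℚ K] : Algebra.FormallyUnramified ℤ K :=
  have : Algebra.FormallyEtale ℚ K := Algebra.FormallyEtale.of_isSeparable ℚ K
  have : Algebra.FormallyUnramified ℤ ℚ :=
    Algebra.FormallyUnramified.of_isLocalization (nonZeroDivisors ℤ)
  Algebra.FormallyUnramified.comp ℤ ℚ K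

namespace KaehlerDifferential

variable {K A : Type*} [Field K] [CommRing A] [Subsingleton Ω[K⁄ℤ]] (π : K[X] →+* A)

theorem D_map_monomial (m : ℕ) (c : K) :
    D ℤ A (π (monomial m c)) = π (monomial (m - 1) (m * c)) • D ℤ A (π X) := by
  have hC : D ℤ A (π (C c)) = 0 := D_ringHom_apply_eq_zero (π.comp C) c
  simp only [← C_mul_X_pow_eq_monomial, map_mul, map_pow, map_natCast, Derivation.leibniz,
    Derivation.leibniz_pow, hC, smul_zero, add_zero, smul_smul, ← Nat.cast_smul_eq_nsmul A]
  ring_nf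

theorem smul_D_map_X_eq [CharZero K] (m : ℕ) (c : K) :
    π (monomial m c) • D ℤ A (π X) = D ℤ A (π (monomial (m + 1) (c / (m + 1)))) := by
  rw [D_map_monomial, Nat.add_sub_cancel]
  push_cast
  rw [mul_div_cancel₀ c (Nat.cast_add_one_ne_zero m)]

variable {π} (hπ : Function.Surjective π)
include hπ

theorem span_D_map_X_eq_top : Submodule.span A {D ℤ A (π X)} = ⊤ := by
  rw [eq_top_iff, ← span_range_derivation, Submodule.span_le]
  rintro _ ⟨a, rfl⟩
  obtain ⟨P, rfl⟩ := hπ a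
  induction P using Polynomial.induction_on' with
  | add P Q hP hQ => rw [map_add, map_add]; exact Submodule.add_mem _ hP hQ
  | monomial m c =>
    rw [D_map_monomial]
    exact Submodule.smul_mem _ _ (Submodule.mem_span_singleton_self _)

theorem smul_D_map_X_mem_closure [CharZero K] {J : Ideal A} (hX : π X ∈ J) (a : A) :
    a • D ℤ A (π X) ∈ AddSubgroup.closure (D ℤ A '' J) := by
  obtain ⟨P, rfl⟩ := hπ a
  induction P using Polynomial.induction_on' with
  | add P Q hP hQ => rw [map_add, add_smul]; exact AddSubgroup.add_mem _ hP hQ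
  | monomial m c =>
    rw [smul_D_map_X_eq]
    refine AddSubgroup.subset_closure ⟨_, ?_, rfl⟩
    rw [← C_mul_X_pow_eq_monomial, map_mul, map_pow]
    exact J.mul_mem_left _ (J.pow_mem_of_mem hX _ m.succ_pos)

theorem closure_D_image_eq_top [CharZero K] {J : Ideal A} (hX : π X ∈ J) :
    AddSubgroup.closure (D ℤ A '' J) = ⊤ := by
  refine eq_top_iff.mpr fun x _ => ?_
  obtain ⟨a, rfl⟩ :=
    Submodule.mem_span_singleton.mp (span_D_map_X_eq_top hπ ▸ Submodule.mem_top : x ∈ _)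
  exact smul_D_map_X_mem_closure hπ hX a

end KaehlerDifferential

theorem stmt_0_general (k' : Type*) [Field k'] [Algebra ℚ k'] [Algebra.IsAlgebraic ℚ k']
    (A : Type*) [CommRing A] (n : ℕ)
    (f : A →+* k')
    (e : A ≃+* (Polynomial k' ⧸ Ideal.span {(Polynomial.X : Polynomial k') ^ n}))
    (he : (RingHom.ker f).map (e : A →+* _) =
      Ideal.span {Ideal.Quotient.mk (Ideal.span {(Polynomial.X : Polynomial k') ^ n})
        Polynomial.X}) :
    letI : Algebra A k' := f.toAlgebra
    haveI : IsScalarTower ℤ A k' := IsScalarTower.of_algebraMap_eq' (Subsingleton.elim _ _)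
    ∀ x ∈ LinearMap.ker (KaehlerDifferential.map ℤ ℤ A k'),
      x ∈ AddSubgroup.closure ((KaehlerDifferential.D ℤ A) '' (RingHom.ker f)) := by
  intro x _
  have : CharZero k' := charZero_of_injective_algebraMap (algebraMap ℚ k').injective
  let π : k'[X] →+* A := e.symm.toRingHom.comp (Ideal.Quotient.mk _)
  have hπ : Function.Surjective π := e.symm.surjective.comp Ideal.Quotient.mk_surjective
  have hX : π X ∈ RingHom.ker f := by
    obtain ⟨t, ht, hte⟩ := (Ideal.mem_map_of_equiv e _).mp (he ▸ Ideal.mem_span_singleton_self _)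
    simpa [π, ← hte] using ht
  rw [KaehlerDifferential.closure_D_image_eq_top hπ hX]
  exact AddSubgroup.mem_top x

/-- Let `k'` be a field algebraic over `ℚ`, and let `A` be a truncated
polynomial ring `k'[t]/(tⁿ)` with augmentation `f : A → k'` and augmentation
ideal `J = ker f = (t)`.  Then `Ω¹_{(A,J)}/d(J) = 0`: every element of the
kernel of `Ω¹_{A/ℤ} → Ω¹_{k'/ℤ}` lies in the subgroup generated by `d(J)`. -/
theorem stmt_0 (k' : Type*) [Field k'] [Algebra ℚ k'] [Algebra.IsAlgebraic ℚ k']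
    (A : Type*) [CommRing A] (n : ℕ) (hn : 1 ≤ n)
    (f : A →+* k') (hf : Function.Surjective f)
    (e : A ≃+* (Polynomial k' ⧸ Ideal.span {(Polynomial.X : Polynomial k') ^ n}))
    (he : (RingHom.ker f).map (e : A →+* _) =
      Ideal.span {Ideal.Quotient.mk (Ideal.span {(Polynomial.X : Polynomial k') ^ n})
        Polynomial.X}) :
    letI : Algebra A k' := f.toAlgebra
    haveI : IsScalarTower ℤ A k' := IsScalarTower.of_algebraMap_eq' (Subsingleton.elim _ _)
    ∀ x ∈ LinearMap.ker (KaehlerDifferential.map ℤ ℤ A k'),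
      x ∈ AddSubgroup.closure ((KaehlerDifferential.D ℤ A) '' (RingHom.ker f)) :=
  stmt_0_general k' A n f e he
end

section
/- Let C be a reduced scheme which is the pushout (double) of a scheme C₀ along a closed subscheme E, i.e., C = C₀ ⊔_E C₀ with the two closed immersions ι± : C₀ → C. Given a rational function f on C₀ that is a unit in the semilocal ring O_{C₀,E} and satisfies f ≡ 1 on E_red, there exists a unit h in O_{C,E} with h|_{C₊} = f and h|_{C₋} = 1. -/
def Units.toEqLocus {R T : Type*} [Ring R] [Semiring T] {φ ψ : R →+* T} (u : Rˣ)
    (h : φ u = ψ u) : (RingHom.eqLocus φ ψ)ˣ where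
  val := ⟨u, h⟩
  inv := ⟨↑u⁻¹, by
    have hmap : Units.map (φ : R →* T) u = Units.map (ψ : R →* T) u := Units.ext h
    simpa only [Units.coe_map_inv, MonoidHom.coe_coe, RingHom.mem_eqLocus] using
      congrArg (fun v : Tˣ => (v⁻¹ : Tˣ).val) hmap⟩
  val_inv := Subtype.ext u.mul_inv
  inv_val := Subtype.ext u.inv_mul

theorem stmt_11_general {S T : Type*} [CommRing S] [CommRing T]
    (π : S →+* T)
    (f : Sˣ) (hf : π (f : S) = 1) :
    ∃ h : (RingHom.eqLocus (π.comp (RingHom.fst S S)) (π.comp (RingHom.snd S S)))ˣ,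
      ((h : RingHom.eqLocus (π.comp (RingHom.fst S S))
          (π.comp (RingHom.snd S S))) : S × S).1 = (f : S) ∧
      ((h : RingHom.eqLocus (π.comp (RingHom.fst S S))
          (π.comp (RingHom.snd S S))) : S × S).2 = 1 :=
  ⟨Units.toEqLocus (MulEquiv.prodUnits.symm (f, 1)) (show π f = π 1 by rw [hf, map_one]),
    rfl, rfl⟩

/-- Units on the double of a curve. Let `S = O_{C₀,E}` be the semilocal ring of
an (integral normal) curve `C₀` at a finite closed subscheme `E`, and let
`π : S → T` be the (surjective) restriction map to `T = O(E_red)`.  The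
semilocal ring `O_{C,E}` of the double `C = C₀ ⊔_{E_red} C₀` is the fiber
product `R = {(a, b) ∈ S × S : π a = π b}`.  Given a unit `f ∈ Sˣ` with
`f ≡ 1` on `E_red` (i.e. `π f = 1`), there is a unit `h ∈ Rˣ` with
`h|_{C₊} = f` and `h|_{C₋} = 1`. -/
theorem stmt_11 {S T : Type*} [CommRing S] [CommRing T]
    (π : S →+* T) (hπ : Function.Surjective π)
    (f : Sˣ) (hf : π (f : S) = 1) :
    ∃ h : (RingHom.eqLocus (π.comp (RingHom.fst S S)) (π.comp (RingHom.snd S S)))ˣ,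
      ((h : RingHom.eqLocus (π.comp (RingHom.fst S S))
          (π.comp (RingHom.snd S S))) : S × S).1 = (f : S) ∧
      ((h : RingHom.eqLocus (π.comp (RingHom.fst S S))
          (π.comp (RingHom.snd S S))) : S × S).2 = 1 :=
  stmt_11_general π f hf
end

section
/- Let X be a Noetherian scheme of pure dimension 1 over a field, with irreducible components X₁, …, Xₙ, such that each scheme-theoretic intersection of two or more distinct components is either empty or a reduced 0-dimensional scheme, each component is smooth, and triple intersections are empty. Then for any irreducible component X₁, letting X₂ be the scheme-theoretic closure of X \ X₁ in X, the scheme X₂ is again such a normal crossing curve with one fewer component, and X₃ = X₁ ∩ X₂ is a 0-dimensional smooth scheme. -/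
/-! Every intersection of components of `X₂` is an intersection of components of `X`, and the
components of `X₂` are exactly the minimal primes `p ≠ p₁` (finite prime avoidance), so `X₂`
inherits the normal crossing conditions. Since triple intersections are empty, the ideals
`p₁ ⊔ p` (`p ≠ p₁`) are pairwise comaximal and `p₁ ⊔ ⋂ p = ⋂ (p₁ ⊔ p)`; by the Chinese remainder
theorem `X₃` is the disjoint union of the intersections `X₁ ∩ Xₚ`, each empty or smooth of
dimension `0`. -/

universe u

/-- A (affine model of a) normal crossing curve over a field `k`: a reduced
finite type `k`-algebra `A` of pure dimension `1` such that for every nonempty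
set `J` of irreducible components (minimal primes), the scheme-theoretic
intersection `A ⧸ ∑_{p ∈ J} p` is either empty (the zero ring) or smooth over
`k` of dimension `2 - |J|` (so components are smooth curves, pairwise
intersections are smooth `0`-dimensional, triple intersections are empty). -/
def IsNCCurve (k A : Type u) [Field k] [CommRing A] [Algebra k A] : Prop :=
  IsReduced A ∧
  (∀ p ∈ minimalPrimes A, ringKrullDim (A ⧸ p) = 1) ∧
  ∀ J : Finset (Ideal A), ↑J ⊆ minimalPrimes A → J.Nonempty →
    Subsingleton (A ⧸ (J.sup id)) ∨
      (Algebra.Smooth k (A ⧸ (J.sup id)) ∧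
        ringKrullDim (A ⧸ (J.sup id)) + (J.card : WithBot ℕ∞) = 2)

theorem WithBot.ENat.le_and_eq_sub_of_add_natCast_eq {d : WithBot ℕ∞} {m n : ℕ}
    (h : d + m = n) : m ≤ n ∧ d = (n - m : ℕ) := by
  induction d using WithBot.recBotCoe with
  | bot => simp at h
  | coe a =>
    induction a using ENat.recTopCoe with
    | top => norm_cast at h
    | coe a =>
      norm_cast at h
      subst h
      simp

namespace Ideal

variable {A : Type*} [CommRing A]

theorem IsPrime.exists_le_of_sInf_le {S : Set (Ideal A)} (hS : S.Finite) {P : Ideal A}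
    (hP : P.IsPrime) (h : sInf S ≤ P) : ∃ p ∈ S, p ≤ P := by
  rw [← hS.coe_toFinset, ← Finset.inf_id_eq_sInf] at h
  simpa using hP.inf_le'.mp h

theorem minimalPrimes_sInf_of_subset_minimalPrimes {S : Set (Ideal A)} (hS : S.Finite)
    (hSA : S ⊆ minimalPrimes A) : (sInf S).minimalPrimes = S := by
  ext r
  constructor
  · rintro ⟨⟨hr, hSr⟩, hmin⟩
    obtain ⟨p, hpS, hpr⟩ := hr.exists_le_of_sInf_le hS hSr
    obtain rfl : r = p := le_antisymm (hmin ⟨(hSA hpS).1.1, sInf_le hpS⟩ hpr) hpr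
    exact hpS
  · intro hrS
    refine ⟨⟨(hSA hrS).1.1, sInf_le hrS⟩, fun y ⟨hy, hSy⟩ hyr => ?_⟩
    obtain ⟨p, hpS, hpy⟩ := hy.exists_le_of_sInf_le hS hSy
    exact (hSA hrS).2 ⟨(hSA hpS).1.1, bot_le⟩ (hpy.trans hyr) |>.trans hpy

noncomputable def minimalPrimesQuotientEquiv (I : Ideal A) :
    minimalPrimes (A ⧸ I) ≃ I.minimalPrimes :=
  (Equiv.Set.image _ _ (comap_injective_of_surjective _ Quotient.mk_surjective)).trans
    (Equiv.setCongr minimalPrimes_eq_comap.symm)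

theorem comap_finset_sup_of_surjective {B F : Type*} [CommRing B] [FunLike F A B]
    [RingHomClass F A B] {f : F} (hf : Function.Surjective f) {J : Finset (Ideal B)}
    (hJ : J.Nonempty) :
    (J.sup id).comap f = (J.image (comap f)).sup id := by
  have hmap : J.sup id = (J.sup (comap f)).map f := by
    rw [Finset.apply_sup_eq_sup_comp (map f) (fun I J => map_sup f I J) map_bot]
    exact Finset.sup_congr rfl fun P _ => (map_comap_of_surjective f hf P).symm
  obtain ⟨P, hP⟩ := hJ
  have hker : RingHom.ker f ≤ J.sup (comap f) :=
    (comap_mono bot_le).trans (Finset.le_sup (f := comap f) hP)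
  rw [Finset.sup_image, Function.id_comp, hmap, comap_map_of_surjective' f hf,
    sup_eq_left.mpr hker]

theorem sup_inf_eq_of_sup_sup_eq_top {I J K : Ideal A} (h : I ⊔ J ⊔ K = ⊤) :
    I ⊔ J ⊓ K = (I ⊔ J) ⊓ (I ⊔ K) := by
  refine le_antisymm (le_inf (sup_le_sup_left inf_le_left I) (sup_le_sup_left inf_le_right I)) ?_
  have hcop : (I ⊔ J) ⊔ (I ⊔ K) = ⊤ := by rwa [sup_sup_sup_comm, sup_idem, ← sup_assoc]
  rw [← mul_eq_inf_of_coprime hcop, sup_mul, mul_sup, mul_sup]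
  exact sup_le (sup_le (le_sup_of_le_left mul_le_right) (le_sup_of_le_left mul_le_left))
    (sup_le (le_sup_of_le_left mul_le_right) (le_sup_of_le_right mul_le_inf))

theorem sup_sInf_eq_iInf_sup {I : Ideal A} {S : Set (Ideal A)} (hS : S.Finite)
    (h : S.Pairwise fun p q => I ⊔ p ⊔ q = ⊤) : I ⊔ sInf S = ⨅ p ∈ S, I ⊔ p := by
  induction S, hS using Set.Finite.induction_on with
  | empty => simp
  | @insert a s ha hs ih =>
    have hcop : I ⊔ a ⊔ sInf s = ⊤ := by
      by_contra hne
      obtain ⟨m, hm, hle⟩ := exists_le_maximal _ hne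
      obtain ⟨q, hqs, hqm⟩ := hm.isPrime.exists_le_of_sInf_le hs (le_sup_right.trans hle)
      refine hm.ne_top (top_le_iff.mp ?_)
      rw [← h (Set.mem_insert a s) (Set.mem_insert_of_mem a hqs)
        (ne_of_mem_of_not_mem hqs ha).symm]
      exact sup_le (le_sup_left.trans hle) hqm
    rw [sInf_insert, sup_inf_eq_of_sup_sup_eq_top hcop, iInf_insert,
      ih (h.mono (Set.subset_insert a s))]

theorem krullDimLE_zero_quotient_sup_sInf {I : Ideal A} {S : Set (Ideal A)} (hS : S.Finite)
    (h : ∀ p ∈ S, Ring.KrullDimLE 0 (A ⧸ (I ⊔ p))) : Ring.KrullDimLE 0 (A ⧸ (I ⊔ sInf S)) := by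
  refine krullDimLE_zero_quotient_iff_forall_minimalPrimes_isMaximal.mpr fun P hP => ?_
  have hPprime := hP.1.1
  obtain ⟨p, hpS, hpP⟩ := hPprime.exists_le_of_sInf_le hS (le_sup_right.trans hP.1.2)
  obtain ⟨M, hM, hMP⟩ := exists_minimalPrimes_le (sup_le (le_sup_left.trans hP.1.2) hpP)
  have hMmax := krullDimLE_zero_quotient_iff_forall_minimalPrimes_isMaximal.mp (h p hpS) M hM
  rwa [← hMmax.eq_of_le hPprime.ne_top hMP]

variable (k : Type*) [CommRing k] [Algebra k A]

noncomputable def quotientInfAlgEquivPiQuotient {ι : Type*} [Finite ι] (f : ι → Ideal A)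
    (hf : Pairwise (Function.onFun IsCoprime f)) : (A ⧸ ⨅ i, f i) ≃ₐ[k] Π i, A ⧸ f i :=
  AlgEquiv.ofRingEquiv (f := quotientInfRingEquivPiQuotient f hf) fun _ => rfl

noncomputable def quotientQuotientAlgEquivComap (I : Ideal A) (P : Ideal (A ⧸ I)) :
    ((A ⧸ I) ⧸ P) ≃ₐ[k] A ⧸ P.comap (Quotient.mkₐ k I) :=
  (quotientEquivAlgOfEq k (map_comap_of_surjective _ (Quotient.mkₐ_surjective k I) P).symm).trans
    (DoubleQuot.quotQuotEquivQuotOfLEₐ k fun x hx => by simp [Quotient.eq_zero_iff_mem.mpr hx])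

theorem formallySmooth_quotient_sup_sInf {I : Ideal A} {S : Set (Ideal A)} (hS : S.Finite)
    (hS3 : S.Pairwise fun p q => I ⊔ p ⊔ q = ⊤)
    (h : ∀ p ∈ S, Algebra.FormallySmooth k (A ⧸ (I ⊔ p))) :
    Algebra.FormallySmooth k (A ⧸ (I ⊔ sInf S)) := by
  have : Finite S := hS.to_subtype
  have : ∀ p : S, Algebra.FormallySmooth k (A ⧸ (I ⊔ p)) := fun p => h p p.2
  have hcop : Pairwise (Function.onFun IsCoprime fun p : S => I ⊔ p) := fun p q hpq =>
    isCoprime_iff_sup_eq.mpr <| by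
      rw [sup_sup_sup_comm, sup_idem, ← sup_assoc]
      exact hS3 p.2 q.2 (Subtype.coe_injective.ne hpq)
  have heq : I ⊔ sInf S = ⨅ p : S, I ⊔ p := by rw [sup_sInf_eq_iInf_sup hS hS3, iInf_subtype']
  exact .of_equiv ((quotientEquivAlgOfEq k heq).trans (quotientInfAlgEquivPiQuotient k _ hcop)).symm

end Ideal

namespace IsNCCurve

variable {k A : Type u} [Field k] [CommRing A] [Algebra k A]

theorem formallySmooth_and_krullDimLE_zero_quotient_sup (hA : IsNCCurve k A) {p q : Ideal A}
    (hp : p ∈ minimalPrimes A) (hq : q ∈ minimalPrimes A) (hpq : p ≠ q) :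
    Algebra.FormallySmooth k (A ⧸ (p ⊔ q)) ∧ Ring.KrullDimLE 0 (A ⧸ (p ⊔ q)) := by
  have hJ : (({p, q} : Finset (Ideal A)) : Set (Ideal A)) ⊆ minimalPrimes A := by
    simp [Set.insert_subset_iff, hp, hq]
  have hsup : ({p, q} : Finset (Ideal A)).sup id = p ⊔ q := by simp
  rcases hA.2.2 {p, q} hJ (Finset.insert_nonempty _ _) with h | ⟨hsm, hdim⟩
  · rw [hsup] at h
    exact ⟨inferInstance, inferInstance⟩
  · rw [hsup, Finset.card_pair hpq] at *
    exact ⟨hsm.formallySmooth,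
      Ring.krullDimLE_iff.mpr (WithBot.ENat.le_and_eq_sub_of_add_natCast_eq hdim).2.le⟩

theorem sup_sup_eq_top (hA : IsNCCurve k A) {p q r : Ideal A} (hp : p ∈ minimalPrimes A)
    (hq : q ∈ minimalPrimes A) (hr : r ∈ minimalPrimes A) (hpq : p ≠ q) (hpr : p ≠ r)
    (hqr : q ≠ r) : p ⊔ q ⊔ r = ⊤ := by
  have hJ : (({p, q, r} : Finset (Ideal A)) : Set (Ideal A)) ⊆ minimalPrimes A := by
    simp [Set.insert_subset_iff, hp, hq, hr]
  have hsup : ({p, q, r} : Finset (Ideal A)).sup id = p ⊔ q ⊔ r := by simp [sup_assoc]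
  rcases hA.2.2 {p, q, r} hJ (Finset.insert_nonempty _ _) with h | ⟨-, hdim⟩
  · rw [hsup] at h
    exact Ideal.Quotient.subsingleton_iff.mp h
  · rw [Finset.card_eq_three.mpr ⟨p, q, r, hpq, hpr, hqr, rfl⟩] at hdim
    exact absurd (WithBot.ENat.le_and_eq_sub_of_add_natCast_eq hdim).1 (by norm_num)

theorem quotient (hA : IsNCCurve k A) {I : Ideal A} (hI : I.IsRadical)
    (hIA : I.minimalPrimes ⊆ minimalPrimes A) : IsNCCurve k (A ⧸ I) := by
  have hcomap : ∀ P ∈ minimalPrimes (A ⧸ I),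
      P.comap (Ideal.Quotient.mkₐ k I) ∈ minimalPrimes A :=
    fun P hP => hIA (by rw [Ideal.minimalPrimes_eq_comap]; exact ⟨P, hP, rfl⟩)
  refine ⟨(Ideal.isRadical_iff_quotient_reduced I).mp hI, fun P hP => ?_, fun J hJA hJ => ?_⟩
  · rw [ringKrullDim_eq_of_ringEquiv (Ideal.quotientQuotientAlgEquivComap k I P).toRingEquiv]
    exact hA.2.1 _ (hcomap P hP)
  · have hsurj := Ideal.Quotient.mkₐ_surjective k I
    let e := (Ideal.quotientQuotientAlgEquivComap k I (J.sup id)).trans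
      (Ideal.quotientEquivAlgOfEq k (Ideal.comap_finset_sup_of_surjective hsurj hJ))
    have hcard : (J.image (Ideal.comap (Ideal.Quotient.mkₐ k I))).card = J.card :=
      Finset.card_image_of_injective _ (Ideal.comap_injective_of_surjective _ hsurj)
    have hJ'A : ↑(J.image (Ideal.comap (Ideal.Quotient.mkₐ k I))) ⊆ minimalPrimes A := by
      simpa [Set.subset_def] using fun P hP => hcomap P (hJA hP)
    rcases hA.2.2 _ hJ'A (hJ.image _) with h | ⟨hsm, hdim⟩
    · exact Or.inl e.toEquiv.subsingleton
    · exact Or.inr ⟨.of_equiv e.symm,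
        by rwa [ringKrullDim_eq_of_ringEquiv e.toRingEquiv, ← hcard]⟩

theorem quotient_sup_sInf [Algebra.FiniteType k A] (hA : IsNCCurve k A) {p₁ : Ideal A}
    (hp₁ : p₁ ∈ minimalPrimes A) {S : Set (Ideal A)} (hS : S.Finite)
    (hSA : S ⊆ minimalPrimes A \ {p₁}) :
    Subsingleton (A ⧸ (p₁ ⊔ sInf S)) ∨
      (Algebra.Smooth k (A ⧸ (p₁ ⊔ sInf S)) ∧ ringKrullDim (A ⧸ (p₁ ⊔ sInf S)) = 0) := by
  have hne : ∀ p ∈ S, p₁ ≠ p := fun p hp => Ne.symm (hSA hp).2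
  have hpair := fun p hp =>
    hA.formallySmooth_and_krullDimLE_zero_quotient_sup hp₁ (hSA hp).1 (hne p hp)
  have htriple : S.Pairwise fun p q => p₁ ⊔ p ⊔ q = ⊤ := fun p hp q hq hpq =>
    hA.sup_sup_eq_top hp₁ (hSA hp).1 (hSA hq).1 (hne p hp) (hne q hq) hpq
  rcases subsingleton_or_nontrivial (A ⧸ (p₁ ⊔ sInf S)) with h | h
  · exact .inl h
  have hdim := Ideal.krullDimLE_zero_quotient_sup_sInf hS fun p hp => (hpair p hp).2
  exact .inr ⟨⟨Ideal.formallySmooth_quotient_sup_sInf k hS htriple fun p hp => (hpair p hp).1,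
    Algebra.FinitePresentation.of_finiteType.mp inferInstance⟩,
    ringKrullDimZero_iff_ringKrullDim_eq_zero.mp hdim⟩

end IsNCCurve

theorem stmt_15_general (k A : Type u) [Field k] [CommRing A] [Algebra k A]
    [IsNoetherianRing A] [Algebra.FiniteType k A]
    (hA : IsNCCurve k A)
    (p₁ : Ideal A) (hp₁ : p₁ ∈ minimalPrimes A) :
    IsNCCurve k (A ⧸ sInf (minimalPrimes A \ {p₁})) ∧
    Nonempty (↥(minimalPrimes (A ⧸ sInf (minimalPrimes A \ {p₁}))) ≃
      ↥(minimalPrimes A \ {p₁})) ∧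
    (Subsingleton (A ⧸ (p₁ ⊔ sInf (minimalPrimes A \ {p₁}))) ∨
      (Algebra.Smooth k (A ⧸ (p₁ ⊔ sInf (minimalPrimes A \ {p₁}))) ∧
        ringKrullDim (A ⧸ (p₁ ⊔ sInf (minimalPrimes A \ {p₁}))) = 0)) := by
  have hS : (minimalPrimes A \ {p₁}).Finite := (minimalPrimes.finite_of_isNoetherianRing A).sdiff
  have hmin := Ideal.minimalPrimes_sInf_of_subset_minimalPrimes hS Set.sdiff_subset
  have hrad : (sInf (minimalPrimes A \ {p₁})).IsRadical := by
    rw [Ideal.IsRadical, ← Ideal.sInf_minimalPrimes, hmin]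
  exact ⟨hA.quotient hrad (hmin.trans_subset Set.sdiff_subset),
    ⟨(Ideal.minimalPrimesQuotientEquiv _).trans (Equiv.setCongr hmin)⟩,
    hA.quotient_sup_sInf hp₁ hS subset_rfl⟩

/-- Let `A` be a normal crossing curve over `k` (Noetherian, of finite type),
let `p₁` be an irreducible component, and let `X₂ = A ⧸ ⋂_{p ≠ p₁} p` be the
scheme-theoretic closure of the complement of the component `X₁ = A ⧸ p₁`.
Then `X₂` is again a normal crossing curve whose components are the remaining
components (one fewer), and `X₃ = X₁ ∩ X₂ = A ⧸ (p₁ + ⋂_{p ≠ p₁} p)` is a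
`0`-dimensional smooth `k`-scheme (possibly empty). -/
theorem stmt_15 (k A : Type u) [Field k] [CommRing A] [Algebra k A]
    [IsNoetherianRing A] [Algebra.FiniteType k A]
    (hA : IsNCCurve k A)
    (p₁ : Ideal A) (hp₁ : p₁ ∈ minimalPrimes A)
    (hn : (minimalPrimes A \ {p₁}).Nonempty) :
    IsNCCurve k (A ⧸ sInf (minimalPrimes A \ {p₁})) ∧
    Nonempty (↥(minimalPrimes (A ⧸ sInf (minimalPrimes A \ {p₁}))) ≃
      ↥(minimalPrimes A \ {p₁})) ∧
    (Subsingleton (A ⧸ (p₁ ⊔ sInf (minimalPrimes A \ {p₁}))) ∨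
      (Algebra.Smooth k (A ⧸ (p₁ ⊔ sInf (minimalPrimes A \ {p₁}))) ∧
        ringKrullDim (A ⧸ (p₁ ⊔ sInf (minimalPrimes A \ {p₁}))) = 0)) :=
  stmt_15_general k A hA p₁ hp₁
end
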